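/- For all n, m ∈ ℕ, all primitive instructions u_1, ..., u_n, and every (possibly empty) finite list Y of primitive instructions: |#(n+1); u_1; ...; u_n; #0 ++ Y| = |#0; u_1; ...; u_n; #0 ++ Y| and |#(n+1); u_1; ...; u_n; #m ++ Y| = |#(m+n+1); u_1; ...; u_n; #m ++ Y|, where ; and ++ denote concatenation of instruction sequences and |·| is thread extraction. -/

import Mathlib

/-- Boolean register names: `inp i` is input register `in:(i+1)`,
`aux i` is auxiliary register `aux:(i+1)`, `out` is the output register. -/
inductive Reg where
  | inp : ℕ → Reg
  | aux : ℕ → Reg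
  | out : Reg
deriving DecidableEq

/-- Basic instructions: register reads/writes, and (for splitting instruction
sequences) `split p` and `reply p` for Boolean parameters `p`. -/
inductive BInstr where
  | get : Reg → BInstr
  | set : Reg → Bool → BInstr
  | split : ℕ → BInstr
  | reply : ℕ → BInstr
deriving DecidableEq

/-- Primitive instructions. -/
inductive PInstr where
  | plain : BInstr → PInstr
  | pos : BInstr → PInstr
  | neg : BInstr → PInstr
  | jump : ℕ → PInstr
  | halt : PInstr
deriving DecidableEq

abbrev RegState := Reg → Bool

/-- State change caused by processing a basic instruction. -/
def BInstr.effect : BInstr → RegState → RegState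
  | .set r b, s => Function.update s r b
  | _, s => s

/-- Reply produced by processing a basic instruction. -/
def BInstr.rpl : BInstr → RegState → Bool
  | .get r, s => s r
  | .set _ b, _ => b
  | _, _ => false

def BInstr.isSplitReply : BInstr → Bool
  | .split _ => true
  | .reply _ => true
  | _ => false

/-- Single-thread execution of an instruction sequence on Boolean registers;
`none` means deadlock, `some s` means termination in register state `s`.
(`split`/`reply` instructions make no sense here and deadlock.) -/
def exec : List PInstr → RegState → Option RegState
  | [], _ => none
  | .plain a :: X, s =>
      if a.isSplitReply then none else exec X (a.effect s)
  | .pos a :: X, s =>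
      if a.isSplitReply then none
      else if a.rpl s then exec X (a.effect s) else exec (X.drop 1) (a.effect s)
  | .neg a :: X, s =>
      if a.isSplitReply then none
      else if a.rpl s then exec (X.drop 1) (a.effect s) else exec X (a.effect s)
  | .jump 0 :: _, _ => none
  | .jump (l+1) :: X, s => exec (X.drop l) s
  | .halt :: _, s => some s
termination_by X _ => X.length
decreasing_by all_goals (simp only [List.length_drop, List.length_cons]; omega)

/-- Initial register state: input registers `in:1 .. in:n` contain
`b 0, ..., b (n-1)`; all other registers contain `false`. -/
def initState (n : ℕ) (b : Fin n → Bool) : RegState := fun r =>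
  match r with
  | .inp i => if h : i < n then b ⟨i, h⟩ else false
  | _ => false

/-- `X` computes the `n`-ary Boolean function `f`: for every input, execution
terminates (does not deadlock) with the output register containing `f b`. -/
def Computes {n : ℕ} (f : (Fin n → Bool) → Bool) (X : List PInstr) : Prop :=
  ∀ b : Fin n → Bool, ∃ s : RegState,
    exec X (initState n b) = some s ∧ s Reg.out = f b

/-- Basic instructions allowed in `IS_br`. -/
def BrBasic : BInstr → Prop
  | .get (.inp _) => True
  | .get (.aux _) => True
  | .set (.aux _) _ => True
  | .set .out _ => True
  | _ => False

/-- Basic instructions allowed in `IS_br^na`. -/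
def NaBasic : BInstr → Prop
  | .get (.inp _) => True
  | .set .out _ => True
  | _ => False

def InstrBasicOK (P : BInstr → Prop) : PInstr → Prop
  | .plain a => P a
  | .pos a => P a
  | .neg a => P a
  | _ => True

/-- Membership of `IS_br` (non-empty, only allowed basic instructions). -/
def ISbr (X : List PInstr) : Prop :=
  X ≠ [] ∧ ∀ u ∈ X, InstrBasicOK BrBasic u

/-- Membership of `IS_br^na`. -/
def ISbrna (X : List PInstr) : Prop :=
  X ≠ [] ∧ ∀ u ∈ X, InstrBasicOK NaBasic u

/-- The primitive instruction contains the basic instruction `out.set:false`. -/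
def UsesOutSetFalse : PInstr → Prop
  | .plain (.set .out false) => True
  | .pos (.set .out false) => True
  | .neg (.set .out false) => True
  | _ => False

/-- The class PLIS of Boolean function families computable by
polynomial-length instruction sequences from `IS_br`. -/
def PLIS (F : (n : ℕ) → (Fin n → Bool) → Bool) : Prop :=
  ∃ h : Polynomial ℕ, ∀ n : ℕ, ∃ X : List PInstr,
    ISbr X ∧ Computes (F n) X ∧ X.length ≤ h.eval n

/-- Finite threads of basic thread algebra: `S` (termination), `D` (deadlock)
and postconditional composition `pcc p a q` (i.e. `p ⊴ a ⊵ q`). -/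
inductive Thread where
  | S : Thread
  | D : Thread
  | pcc : Thread → BInstr → Thread → Thread

/-- Thread extraction `|X|` of an instruction sequence. -/
def textract : List PInstr → Thread
  | [] => .D
  | .plain a :: X => .pcc (textract X) a (textract X)
  | .pos a :: X => .pcc (textract X) a (textract (X.drop 1))
  | .neg a :: X => .pcc (textract (X.drop 1)) a (textract X)
  | .jump 0 :: _ => .D
  | .jump (l+1) :: X => textract (X.drop l)
  | .halt :: _ => .S
termination_by X => X.length
decreasing_by all_goals (simp only [List.length_drop, List.length_cons]; omega)

/-- Terms of BTA with explicit substitution: `subst p x q` is `⟨p/x⟩q`. -/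
inductive ESTerm where
  | S : ESTerm
  | D : ESTerm
  | var : ℕ → ESTerm
  | pcc : ESTerm → BInstr → ESTerm → ESTerm
  | subst : ESTerm → ℕ → ESTerm → ESTerm

/-- Evaluation of a term to a finite thread (an environment interprets the
variables; for closed terms the result is independent of it). -/
def ESTerm.eval (env : ℕ → Thread) : ESTerm → Thread
  | .S => .S
  | .D => .D
  | .var x => env x
  | .pcc p a q => .pcc (p.eval env) a (q.eval env)
  | .subst p x q => q.eval (Function.update env x (p.eval env))

/-- Free variables; a term is closed iff it has none. -/
def ESTerm.fv : ESTerm → Finset ℕ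
  | .S => ∅
  | .D => ∅
  | .var x => {x}
  | .pcc p _ q => p.fv ∪ q.fv
  | .subst p x q => p.fv ∪ (q.fv \ {x})

/-- Size of a term. -/
def ESTerm.tsize : ESTerm → ℕ
  | .S => 1
  | .D => 1
  | .var _ => 1
  | .pcc p _ q => p.tsize + q.tsize + 1
  | .subst p _ q => p.tsize + q.tsize + 1

/-!
`#(n+1)` skips the `n` instructions `u_i` and lands on `#m`. Arriving at `#m` has the same
effect as jumping `m` places beyond it, which is exactly what `#(m+n+1)` does; for `m = 0`
both sides deadlock.
-/

theorem textract_jump_zero (X : List PInstr) : textract (.jump 0 :: X) = .D := by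
  rw [textract]

theorem textract_jump_succ (l : ℕ) (X : List PInstr) :
    textract (.jump (l + 1) :: X) = textract (X.drop l) := by
  rw [textract]

theorem textract_jump_length_add_append (us X : List PInstr) (l : ℕ) :
    textract (.jump (us.length + l + 1) :: (us ++ X)) = textract (X.drop l) := by
  rw [textract_jump_succ, List.drop_length_add_append]

theorem textract_jump_length_append (us X : List PInstr) :
    textract (.jump (us.length + 1) :: (us ++ X)) = textract X :=
  textract_jump_length_add_append us X 0

theorem textract_jump_eq_drop_self (m : ℕ) (Y : List PInstr) :
    textract (.jump m :: Y) = textract ((.jump m :: Y).drop m) := by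
  cases m with
  | zero => rfl
  | succ l => rw [textract_jump_succ, List.drop_succ_cons]

/-- The axioms for structural congruence: chains of forward jumps may be
removed in favour of single jumps without changing the extracted thread. -/
theorem statement16 (n m : ℕ) (us Y : List PInstr) (hus : us.length = n) :
    textract ((PInstr.jump (n + 1) :: us) ++ (PInstr.jump 0 :: Y)) =
      textract ((PInstr.jump 0 :: us) ++ (PInstr.jump 0 :: Y)) ∧
    textract ((PInstr.jump (n + 1) :: us) ++ (PInstr.jump m :: Y)) =
      textract ((PInstr.jump (m + n + 1) :: us) ++ (PInstr.jump m :: Y)) := by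
  subst hus
  simp only [List.cons_append, textract_jump_length_append, textract_jump_zero, true_and]
  rw [add_comm m, textract_jump_length_add_append, ← textract_jump_eq_drop_self]
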